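/- Let k ≥ 1, λ > 0, and let μ_λ be the product on ℝ^k of k copies of the uniform distribution on [−λ, λ]. For any measurable h : ℝ^k → ℝ with 0 ≤ h ≤ 1, define ĥ(x) = ∫ h(x + ε) dμ_λ(ε). Then for all x, y ∈ ℝ^k one has |ĥ(x) − ĥ(y)| ≤ ‖x − y‖₁ / (2λ); in particular ĥ is (2λ)⁻¹-Lipschitz with respect to the ℓ₁ norm on ℝ^k. -/

import Mathlib

open MeasureTheory

/-- The product on `ℝ^k` of `k` copies of the uniform distribution on `[-λ, λ]`. -/
noncomputable def unifPi (k : ℕ) (l : ℝ) : Measure (Fin k → ℝ) :=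
  Measure.pi fun _ => (ENNReal.ofReal (2 * l))⁻¹ • volume.restrict (Set.Icc (-l) l)

/-!
Under `μ_λ`, the smoothed value `ĥ x` is the average of `h` over the sup-norm ball
`closedBall x λ`, a cube of side `2λ`. Two such cubes have the same volume, so, because
`0 ≤ h ≤ 1`, the two averages differ by at most the relative volume of the part of one cube
outside the other, `1 - ∏ i, (1 - |x i - y i| / (2λ))⁺`, and this is at most
`∑ i, |x i - y i| / (2λ)` by a Weierstrass product inequality.
-/

open ProbabilityTheory Metric

theorem one_sub_prod_max_le_sum {ι : Type*} (s : Finset ι) {a : ι → ℝ} (ha : ∀ i ∈ s, 0 ≤ a i) :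
    1 - ∏ i ∈ s, max (1 - a i) 0 ≤ ∑ i ∈ s, a i := by
  classical
  induction s using Finset.induction_on with
  | empty => simp
  | insert j s hj ih =>
    rw [Finset.prod_insert hj, Finset.sum_insert hj]
    set P := ∏ i ∈ s, max (1 - a i) 0
    have hP0 : 0 ≤ P := Finset.prod_nonneg fun i _ => le_max_right _ _
    have hP1 : P ≤ 1 := Finset.prod_le_one (fun i _ => le_max_right _ _)
      fun i hi => max_le (by linarith [ha i (Finset.mem_insert_of_mem hi)]) zero_le_one
    have haj := ha j (Finset.mem_insert_self j s)
    calc 1 - max (1 - a j) 0 * P ≤ 1 - (1 - a j) * P :=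
          sub_le_sub_left (mul_le_mul_of_nonneg_right (le_max_left _ _) hP0) 1
      _ = (1 - P) + a j * P := by ring
      _ ≤ ∑ i ∈ s, a i + a j :=
          add_le_add (ih fun i hi => ha i (Finset.mem_insert_of_mem hi))
            (mul_le_of_le_one_right haj hP1)
      _ = a j + ∑ i ∈ s, a i := add_comm _ _

section SetAverage

variable {X : Type*} [MeasurableSpace X] {μ : Measure X} {f : X → ℝ} {A B : Set X}

/- The integrals over `A \ B` and `B \ A` both lie in `[0, μ.real (A \ B)]`, so their
difference is bounded by that volume, not by twice it. -/
theorem abs_setIntegral_sub_setIntegral_le (hA : MeasurableSet A) (hB : MeasurableSet B)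
    (hAB : μ A = μ B) (hA_fin : μ A ≠ ⊤) (hf : AEStronglyMeasurable f μ)
    (hf0 : ∀ x, 0 ≤ f x) (hf1 : ∀ x, f x ≤ 1) :
    |∫ x in A, f x ∂μ - ∫ x in B, f x ∂μ| ≤ μ.real A - μ.real (A ∩ B) := by
  have hsplit : ∀ {S T : Set X}, MeasurableSet T → μ S ≠ ⊤ →
      ∫ x in S, f x ∂μ = ∫ x in S ∩ T, f x ∂μ + ∫ x in S \ T, f x ∂μ ∧
      0 ≤ ∫ x in S \ T, f x ∂μ ∧ ∫ x in S \ T, f x ∂μ ≤ μ.real S - μ.real (S ∩ T) := by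
    intro S T hT hS
    have hf_norm : ∀ x, ‖f x‖ ≤ 1 := fun x => by rw [Real.norm_of_nonneg (hf0 x)]; exact hf1 x
    have hle := norm_setIntegral_le_of_norm_le_const (s := S \ T) (μ := μ)
      (measure_ne_top_of_subset Set.sdiff_subset hS).lt_top fun x _ => hf_norm x
    rw [Real.norm_eq_abs, one_mul] at hle
    refine ⟨(integral_inter_add_sdiff hT ?_).symm, setIntegral_nonneg_of_ae_restrict ?_, ?_⟩
    · exact Measure.integrableOn_of_bounded hS hf (Filter.Eventually.of_forall hf_norm)
    · exact Filter.Eventually.of_forall fun x => hf0 x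
    · linarith [le_abs_self (∫ x in S \ T, f x ∂μ), measureReal_inter_add_sdiff (μ := μ) hT hS]
  obtain ⟨hA_split, hAB0, hAB1⟩ := hsplit (S := A) hB hA_fin
  obtain ⟨hB_split, hBA0, hBA1⟩ := hsplit (S := B) hA (hAB ▸ hA_fin)
  have hAB_real : μ.real B = μ.real A := by rw [Measure.real, Measure.real, hAB]
  rw [Set.inter_comm, hAB_real] at hBA1
  rw [hA_split, hB_split, Set.inter_comm B, abs_sub_le_iff]
  constructor <;> linarith

theorem abs_integral_cond_sub_integral_cond_le (hA : MeasurableSet A) (hB : MeasurableSet B)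
    (hAB : μ A = μ B) (hA_fin : μ A ≠ ⊤) (hf : AEStronglyMeasurable f μ)
    (hf0 : ∀ x, 0 ≤ f x) (hf1 : ∀ x, f x ≤ 1) :
    |∫ x, f x ∂μ[|A] - ∫ x, f x ∂μ[|B]| ≤ 1 - μ.real (A ∩ B) / μ.real A := by
  rcases eq_or_ne (μ A) 0 with hA0 | hA0
  · simp [ProbabilityTheory.cond, hA0, ← hAB, measureReal_def]
  have hA_pos : 0 < μ.real A := ENNReal.toReal_pos hA0 hA_fin
  simp only [ProbabilityTheory.cond, integral_smul_measure, ← hAB, smul_eq_mul, ← mul_sub,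
    abs_mul, ENNReal.toReal_inv]
  rw [← measureReal_def, abs_of_pos (inv_pos.2 hA_pos), one_sub_div hA_pos.ne', div_eq_inv_mul]
  exact mul_le_mul_of_nonneg_left (abs_setIntegral_sub_setIntegral_le hA hB hAB hA_fin hf hf0 hf1)
    (inv_nonneg.2 hA_pos.le)

end SetAverage

theorem MeasureTheory.Measure.pi_cond {ι : Type*} [Fintype ι] {α : ι → Type*}
    [∀ i, MeasurableSpace (α i)] (μ : ∀ i, Measure (α i)) [∀ i, SigmaFinite (μ i)]
    {s : ∀ i, Set (α i)} (hs : ∀ i, MeasurableSet (s i)) (hs_fin : ∀ i, μ i (s i) ≠ ⊤) :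
    Measure.pi (fun i => (μ i)[|s i]) = (Measure.pi μ)[|Set.univ.pi s] := by
  refine Measure.pi_eq fun t ht => ?_
  rw [cond_apply (MeasurableSet.univ_pi hs), ← Set.pi_inter_distrib, Measure.pi_pi,
    Measure.pi_pi, ENNReal.prod_inv_distrib fun i _ j _ _ => Or.inr (hs_fin j),
    ← Finset.prod_mul_distrib]
  simp only [cond_apply (hs _)]

theorem integral_comp_add_left_cond_closedBall {E : Type*} [NormedAddCommGroup E]
    [MeasurableSpace E] [BorelSpace E] (μ : Measure E) [μ.IsAddLeftInvariant]
    (f : E → ℝ) (x : E) (r : ℝ) :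
    ∫ ε, f (x + ε) ∂μ[|closedBall 0 r] = ∫ t, f t ∂μ[|closedBall x r] := by
  have h_preimage : (x + ·) ⁻¹' closedBall x r = closedBall 0 r := by
    simp [preimage_add_closedBall]
  have h_measure : μ (closedBall 0 r) = μ (closedBall x r) := by
    rw [← h_preimage, measure_preimage_add]
  simp only [ProbabilityTheory.cond, integral_smul_measure, h_measure]
  rw [← h_preimage, (measurePreserving_add_left μ x).setIntegral_preimage_emb
    (measurableEmbedding_addLeft x)]

theorem volume_real_closedBall_inter_closedBall {ι : Type*} [Fintype ι] (x y : ι → ℝ) {r : ℝ}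
    (hr : 0 ≤ r) :
    volume.real (closedBall x r ∩ closedBall y r) = ∏ i, max (2 * r - |x i - y i|) 0 := by
  rw [closedBall_pi _ hr, closedBall_pi _ hr, ← Set.pi_inter_distrib, measureReal_def,
    volume_pi_pi, ENNReal.toReal_prod]
  refine Finset.prod_congr rfl fun i _ => ?_
  rw [Real.closedBall_eq_Icc, Real.closedBall_eq_Icc, Set.Icc_inter_Icc, Real.volume_Icc,
    ENNReal.toReal_ofReal', min_add_add_right, max_sub_sub_right, ← max_sub_min_eq_abs']
  ring_nf

theorem unifPi_eq_cond {k : ℕ} {l : ℝ} (hl : 0 < l) :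
    unifPi k l = volume[|closedBall (0 : Fin k → ℝ) l] := by
  have h_Icc : volume (Set.Icc (-l) l) = ENNReal.ofReal (2 * l) := by
    rw [Real.volume_Icc]; ring_nf
  rw [closedBall_pi _ hl.le, volume_pi, ← Measure.pi_cond _ (fun _ => measurableSet_closedBall)
    fun _ => measure_closedBall_lt_top.ne, unifPi]
  simp only [Pi.zero_apply, Real.closedBall_eq_Icc, zero_sub, zero_add, ProbabilityTheory.cond,
    h_Icc]

theorem stmt_2_general {k : ℕ} {l : ℝ} (hl : 0 < l)
    (h : (Fin k → ℝ) → ℝ) (hmeas : Measurable h)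
    (h0 : ∀ ψ, 0 ≤ h ψ) (h1 : ∀ ψ, h ψ ≤ 1)
    (x y : Fin k → ℝ) :
    |(∫ ε, h (x + ε) ∂(unifPi k l)) - ∫ ε, h (y + ε) ∂(unifPi k l)| ≤
      (∑ i, |x i - y i|) / (2 * l) := by
  have hvol : ∀ z : Fin k → ℝ, volume (closedBall z l) = ENNReal.ofReal ((2 * l) ^ k) :=
    fun z => by rw [Real.volume_pi_closedBall z hl.le, Fintype.card_fin]
  rw [unifPi_eq_cond hl, integral_comp_add_left_cond_closedBall,
    integral_comp_add_left_cond_closedBall]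
  calc _ ≤ 1 - volume.real (closedBall x l ∩ closedBall y l) / volume.real (closedBall x l) :=
        abs_integral_cond_sub_integral_cond_le measurableSet_closedBall measurableSet_closedBall
          (by rw [hvol, hvol]) measure_closedBall_lt_top.ne hmeas.aestronglyMeasurable h0 h1
    _ = 1 - ∏ i, max (1 - |x i - y i| / (2 * l)) 0 := by
        rw [volume_real_closedBall_inter_closedBall x y hl.le, measureReal_def, hvol,
          ENNReal.toReal_ofReal (by positivity), ← Fin.prod_const, ← Finset.prod_div_distrib]
        refine congrArg _ (Finset.prod_congr rfl fun i _ => ?_)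
        rw [← max_div_div_right (by positivity), sub_div, div_self (by positivity), zero_div]
    _ ≤ ∑ i, |x i - y i| / (2 * l) :=
        one_sub_prod_max_le_sum _ fun i _ => div_nonneg (abs_nonneg _) (by positivity)
    _ = _ := (Finset.sum_div ..).symm

theorem stmt_2 {k : ℕ} (hk : 1 ≤ k) {l : ℝ} (hl : 0 < l)
    (h : (Fin k → ℝ) → ℝ) (hmeas : Measurable h)
    (h0 : ∀ ψ, 0 ≤ h ψ) (h1 : ∀ ψ, h ψ ≤ 1)
    (x y : Fin k → ℝ) :
    |(∫ ε, h (x + ε) ∂(unifPi k l)) - ∫ ε, h (y + ε) ∂(unifPi k l)| ≤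
      (∑ i, |x i - y i|) / (2 * l) :=
  stmt_2_general hl h hmeas h0 h1 x y
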